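/- arXiv:2306.02831 — 2 statements merged into one kernel-verified Lean document; each statement's English description precedes it below -/
import Mathlib

section
/- Let W be a nonnegative P×P matrix with acyclic directed graph G, define l(W) = I + Σ_{k=1}^P W^k, and T_c(W)_{ij} = S(c·(l(W)_{ij} − l(W)_{ji})) where S is the sigmoid. Then as c → ∞, T_c(W)_{ij} converges to T*(G)_{ij} for every pair (i,j), where T*(G)_{ij} is 1 if j is reachable from i, 0 if i is reachable from j, and 0.5 otherwise (including i = j). -/
open Filter

open Classical in
/-- The transitive causal matrix defined via reachability. -/
noncomputable def TstarR {V : Type*} (E : V → V → Prop) (i j : V) : ℝ :=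
  if Relation.TransGen E i j then 1
  else if Relation.TransGen E j i then 0
  else 1 / 2

section Aux

variable {P : ℕ} {W : Matrix (Fin P) (Fin P) ℝ}

lemma aux_pow_nonneg (hnonneg : ∀ i j, 0 ≤ W i j) :
    ∀ k, ∀ i j, 0 ≤ (W ^ k) i j := by
  intro k
  induction k with
  | zero =>
    intro i j
    simp only [pow_zero, Matrix.one_apply]
    split <;> norm_num
  | succ n ih =>
    intro i j
    rw [pow_succ, Matrix.mul_apply]
    exact Finset.sum_nonneg fun m _ => mul_nonneg (ih i m) (hnonneg m j)

lemma aux_pos_to_transgen (hnonneg : ∀ i j, 0 ≤ W i j) :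
    ∀ k, 1 ≤ k → ∀ i j, 0 < (W ^ k) i j →
      Relation.TransGen (fun a b => 0 < W a b) i j := by
  intro k
  induction k with
  | zero => omega
  | succ n ih =>
    intro _ i j hpos
    rcases Nat.eq_zero_or_pos n with hn | hn
    · subst hn
      simpa using Relation.TransGen.single (by simpa using hpos)
    · rw [pow_succ', Matrix.mul_apply] at hpos
      have : ∃ m, (0:ℝ) < W i m * (W ^ n) m j := by
        obtain ⟨m, _, hm⟩ := Finset.exists_lt_of_sum_lt (by simpa using hpos :
          (∑ m, (0:ℝ)) < ∑ m, W i m * (W ^ n) m j)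
        exact ⟨m, hm⟩
      obtain ⟨m, hm⟩ := this
      have h1 : 0 < W i m := by
        by_contra h
        have : W i m = 0 := le_antisymm (not_lt.mp h) (hnonneg i m)
        simp [this] at hm
      have h2 : 0 < (W ^ n) m j := by
        by_contra h
        have : (W ^ n) m j = 0 := le_antisymm (not_lt.mp h) (aux_pow_nonneg hnonneg n m j)
        simp [this] at hm
      exact Relation.TransGen.head h1 (ih hn m j h2)

lemma aux_transgen_to_pos (hnonneg : ∀ i j, 0 ≤ W i j) {i j : Fin P}
    (h : Relation.TransGen (fun a b => 0 < W a b) i j) :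
    ∃ k, 1 ≤ k ∧ 0 < (W ^ k) i j := by
  induction h with
  | single hedge => exact ⟨1, le_refl 1, by simpa using hedge⟩
  | @tail b c hab hedge ih =>
    obtain ⟨k, hk1, hkpos⟩ := ih
    refine ⟨k + 1, by omega, ?_⟩
    rw [pow_succ, Matrix.mul_apply]
    refine lt_of_lt_of_le (mul_pos hkpos hedge) ?_
    exact Finset.single_le_sum (f := fun m => (W ^ k) i m * W m c)
      (fun m _ => mul_nonneg (aux_pow_nonneg hnonneg k _ _) (hnonneg _ _))
      (Finset.mem_univ b)

lemma aux_pos_to_chain (hnonneg : ∀ i j, 0 ≤ W i j) :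
    ∀ k, ∀ i j : Fin P, 0 < (W ^ k) i j →
      ∃ f : Fin (k + 1) → Fin P, f 0 = i ∧ f (Fin.last k) = j ∧
        ∀ t : Fin k, 0 < W (f t.castSucc) (f t.succ) := by
  intro k
  induction k with
  | zero =>
    intro i j hpos
    have hij : i = j := by
      by_contra h
      simp [pow_zero, Matrix.one_apply, h] at hpos
    exact ⟨fun _ => i, rfl, hij, fun t => t.elim0⟩
  | succ n ih =>
    intro i j hpos
    rw [pow_succ', Matrix.mul_apply] at hpos
    obtain ⟨m, _, hm⟩ := Finset.exists_lt_of_sum_lt (by simpa using hpos :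
      (∑ m, (0:ℝ)) < ∑ m, W i m * (W ^ n) m j)
    have h1 : 0 < W i m := by
      by_contra h
      have : W i m = 0 := le_antisymm (not_lt.mp h) (hnonneg i m)
      simp [this] at hm
    have h2 : 0 < (W ^ n) m j := by
      by_contra h
      have : (W ^ n) m j = 0 := le_antisymm (not_lt.mp h) (aux_pow_nonneg hnonneg n m j)
      simp [this] at hm
    obtain ⟨g, hg0, hglast, hgedge⟩ := ih m j h2
    refine ⟨Fin.cases i g, by simp, ?_, ?_⟩
    · have e : Fin.last (n + 1) = (⟨n + 1, by omega⟩ : Fin (n + 2)) := rfl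
      rw [e]
      simp only [Fin.cases_succ']
      exact hglast
    · intro t
      obtain ⟨tv, ht⟩ := t
      cases tv with
      | zero =>
        have e1 : (⟨0, ht⟩ : Fin (n + 1)).castSucc = (⟨0, by omega⟩ : Fin (n + 2)) := rfl
        have e2 : (⟨0, ht⟩ : Fin (n + 1)).succ = (⟨0 + 1, by omega⟩ : Fin (n + 2)) := rfl
        rw [e1, e2]
        simp only [Fin.mk_zero, Fin.cases_zero, Fin.cases_succ', hg0]
        exact h1
      | succ s =>
        have e1 : (⟨s + 1, ht⟩ : Fin (n + 1)).castSucc = (⟨s + 1, by omega⟩ : Fin (n + 2)) := rfl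
        have e2 : (⟨s + 1, ht⟩ : Fin (n + 1)).succ = (⟨(s + 1) + 1, by omega⟩ : Fin (n + 2)) := rfl
        rw [e1, e2]
        simp only [Fin.cases_succ']
        have := hgedge ⟨s, by omega⟩
        simpa [Fin.castSucc_mk, Fin.succ_mk] using this
  
lemma aux_chain_transgen {k : ℕ} (f : Fin (k + 1) → Fin P)
    (hf : ∀ t : Fin k, 0 < W (f t.castSucc) (f t.succ)) :
    ∀ b a : ℕ, ∀ (hab : a < b) (hb : b ≤ k),
      Relation.TransGen (fun a b => 0 < W a b)
        (f ⟨a, by omega⟩) (f ⟨b, by omega⟩) := by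
  intro b
  induction b with
  | zero => omega
  | succ n ih =>
    intro a hab hb
    have hedge : 0 < W (f ⟨n, by omega⟩) (f ⟨n + 1, by omega⟩) := by
      have := hf ⟨n, by omega⟩
      simpa [Fin.castSucc_mk, Fin.succ_mk] using this
    rcases Nat.lt_or_ge a n with h | h
    · exact (ih a h (by omega)).tail hedge
    · have : a = n := by omega
      subst this
      exact Relation.TransGen.single hedge

lemma aux_pos_lt (hnonneg : ∀ i j, 0 ≤ W i j)
    (hacyclic : ∀ i : Fin P, ¬ Relation.TransGen (fun a b => 0 < W a b) i i)
    {k : ℕ} {i j : Fin P} (hpos : 0 < (W ^ k) i j) : k < P := by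
  by_contra h
  push_neg at h
  obtain ⟨f, _, _, hfe⟩ := aux_pos_to_chain hnonneg k i j hpos
  have hcard : Fintype.card (Fin P) < Fintype.card (Fin (k + 1)) := by
    simp; omega
  obtain ⟨a, b, hab, heq⟩ := Fintype.exists_ne_map_eq_of_card_lt f hcard
  rcases lt_or_gt_of_ne hab with hlt | hgt
  · have := aux_chain_transgen f hfe b a hlt (by omega)
    rw [show (⟨(a:ℕ), by omega⟩ : Fin (k+1)) = a from rfl,
        show (⟨(b:ℕ), by omega⟩ : Fin (k+1)) = b from rfl, heq] at this
    exact hacyclic _ this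
  · have := aux_chain_transgen f hfe a b hgt (by omega)
    rw [show (⟨(b:ℕ), by omega⟩ : Fin (k+1)) = b from rfl,
        show (⟨(a:ℕ), by omega⟩ : Fin (k+1)) = a from rfl, ← heq] at this
    exact hacyclic _ this

lemma aux_sum_pos (hnonneg : ∀ i j, 0 ≤ W i j)
    (hacyclic : ∀ i : Fin P, ¬ Relation.TransGen (fun a b => 0 < W a b) i i)
    {i j : Fin P} (h : Relation.TransGen (fun a b => 0 < W a b) i j) :
    0 < ∑ k ∈ Finset.Icc 1 P, (W ^ k) i j := by
  obtain ⟨k, hk1, hkpos⟩ := aux_transgen_to_pos hnonneg h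
  have hkP : k < P := aux_pos_lt hnonneg hacyclic hkpos
  exact Finset.sum_pos' (fun m _ => aux_pow_nonneg hnonneg m i j)
    ⟨k, Finset.mem_Icc.mpr ⟨hk1, by omega⟩, hkpos⟩

lemma aux_sum_zero (hnonneg : ∀ i j, 0 ≤ W i j)
    {i j : Fin P} (h : ¬ Relation.TransGen (fun a b => 0 < W a b) i j) :
    ∑ k ∈ Finset.Icc 1 P, (W ^ k) i j = 0 := by
  apply Finset.sum_eq_zero
  intro k hk
  have hk1 : 1 ≤ k := (Finset.mem_Icc.mp hk).1
  by_contra hne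
  have hpos : 0 < (W ^ k) i j :=
    lt_of_le_of_ne (aux_pow_nonneg hnonneg k i j) (Ne.symm hne)
  exact h (aux_pos_to_transgen hnonneg k hk1 i j hpos)

lemma aux_tendsto_pos {d : ℝ} (hd : 0 < d) :
    Tendsto (fun c : ℝ => 1 / (1 + Real.exp (-(c * d)))) atTop (nhds 1) := by
  have h1 : Tendsto (fun c : ℝ => c * d) atTop atTop :=
    Tendsto.atTop_mul_const hd tendsto_id
  have h2 : Tendsto (fun c : ℝ => -(c * d)) atTop atBot :=
    tendsto_neg_atTop_atBot.comp h1
  have h3 : Tendsto (fun c : ℝ => Real.exp (-(c * d))) atTop (nhds 0) :=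
    Real.tendsto_exp_atBot.comp h2
  have h4 : Tendsto (fun c : ℝ => 1 + Real.exp (-(c * d))) atTop (nhds (1 + 0)) :=
    tendsto_const_nhds.add h3
  have h5 := (tendsto_const_nhds : Tendsto (fun _ : ℝ => (1:ℝ)) atTop (nhds 1)).div h4 (by norm_num)
  have : (fun _ : ℝ => (1:ℝ)) / (fun c : ℝ => 1 + Real.exp (-(c * d))) = fun c : ℝ => 1 / (1 + Real.exp (-(c * d))) := rfl
  rw [this] at h5
  simpa using h5

lemma aux_tendsto_neg {d : ℝ} (hd : d < 0) :
    Tendsto (fun c : ℝ => 1 / (1 + Real.exp (-(c * d)))) atTop (nhds 0) := by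
  have h1 : Tendsto (fun c : ℝ => c * (-d)) atTop atTop :=
    Tendsto.atTop_mul_const (by linarith) tendsto_id
  have h2 : Tendsto (fun c : ℝ => -(c * d)) atTop atTop := by
    convert h1 using 2 with c
    ring
  have h3 : Tendsto (fun c : ℝ => Real.exp (-(c * d))) atTop atTop :=
    Real.tendsto_exp_atTop.comp h2
  have h4 : Tendsto (fun c : ℝ => 1 + Real.exp (-(c * d))) atTop atTop :=
    tendsto_atTop_add_const_left atTop 1 h3
  have h5 : Tendsto (fun c : ℝ => (1 + Real.exp (-(c * d)))⁻¹) atTop (nhds 0) :=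
    tendsto_inv_atTop_zero.comp h4
  simpa [one_div] using h5

end Aux

theorem DCD_converges_to_Tstar (P : ℕ) (W : Matrix (Fin P) (Fin P) ℝ)
    (hnonneg : ∀ i j, 0 ≤ W i j)
    (hacyclic : ∀ i : Fin P, ¬ Relation.TransGen (fun a b => 0 < W a b) i i)
    (S : ℝ → ℝ) (hS : ∀ x, S x = 1 / (1 + Real.exp (-x)))
    (l : Matrix (Fin P) (Fin P) ℝ)
    (hl : l = 1 + ∑ k ∈ Finset.Icc 1 P, W ^ k) :
    ∀ i j : Fin P,
      Tendsto (fun c : ℝ => S (c * (l i j - l j i))) atTop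
        (nhds (TstarR (fun a b => 0 < W a b) i j)) := by
  intro i j
  have hlapp : ∀ a b : Fin P, l a b = (1 : Matrix (Fin P) (Fin P) ℝ) a b
      + ∑ k ∈ Finset.Icc 1 P, (W ^ k) a b := by
    intro a b
    rw [hl]
    simp [Matrix.add_apply, Matrix.sum_apply]
  simp only [hS]
  by_cases hij : Relation.TransGen (fun a b => 0 < W a b) i j
  · have hji : ¬ Relation.TransGen (fun a b => 0 < W a b) j i := fun h =>
      hacyclic i (hij.trans h)
    have hne : i ≠ j := fun h => hacyclic i (h ▸ hij)
    have hd : 0 < l i j - l j i := by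
      rw [hlapp, hlapp, Matrix.one_apply_ne hne, Matrix.one_apply_ne (Ne.symm hne),
        aux_sum_zero hnonneg hji]
      simpa using aux_sum_pos hnonneg hacyclic hij
    rw [TstarR, if_pos hij]
    exact aux_tendsto_pos hd
  · by_cases hji : Relation.TransGen (fun a b => 0 < W a b) j i
    · have hne : i ≠ j := fun h => hacyclic j (h ▸ hji)
      have hd : l i j - l j i < 0 := by
        rw [hlapp, hlapp, Matrix.one_apply_ne hne, Matrix.one_apply_ne (Ne.symm hne),
          aux_sum_zero hnonneg hij]
        simpa using aux_sum_pos hnonneg hacyclic hji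
      rw [TstarR, if_neg hij, if_pos hji]
      exact aux_tendsto_neg hd
    · have hd : l i j - l j i = 0 := by
        rw [hlapp, hlapp, aux_sum_zero hnonneg hij, aux_sum_zero hnonneg hji]
        have : (1 : Matrix (Fin P) (Fin P) ℝ) i j = (1 : Matrix (Fin P) (Fin P) ℝ) j i := by
          by_cases h : i = j
          · rw [h]
          · rw [Matrix.one_apply_ne h, Matrix.one_apply_ne (Ne.symm h)]
        rw [this]
        ring
      rw [TstarR, if_neg hij, if_neg hji]
      have : ∀ c : ℝ, 1 / (1 + Real.exp (-(c * (l i j - l j i)))) = 1 / 2 := by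
        intro c
        rw [hd]
        norm_num
      simp only [this]
      exact tendsto_const_nhds
end

section
/- Let W be a nonnegative P×P matrix. Then tr(exp(W)) ≥ P, with equality if and only if the directed graph of W (edge (i,j) iff W_{ij} > 0, including self-loops) is acyclic. -/
/-!
Expanding the exponential, `tr (exp W) = ∑ₖ tr (W ^ k) / k!`. For `W ≥ 0` every term is
nonnegative and the `k = 0` term is `tr 1 = P`, so `tr (exp W) ≥ P`, with equality iff
`tr (W ^ k) = 0` for all `k ≥ 1`. A diagonal entry `(W ^ k) i i` is positive exactly when the
graph of `W` has a closed walk of length `k` through `i`, so equality holds iff there is no cycle.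
-/

open NormedSpace Nat

theorem HasSum.eq_apply_iff_of_nonneg {ι α : Type*} [AddCommMonoid α] [PartialOrder α]
    [IsOrderedAddMonoid α] [AddRightStrictMono α] [TopologicalSpace α] [OrderClosedTopology α]
    {f : ι → α} {a : α} (hf : HasSum f a) (hnonneg : ∀ j, 0 ≤ f j) (i : ι) :
    a = f i ↔ ∀ j ≠ i, f j = 0 := by
  refine ⟨fun ha j hji => ?_, fun h => hf.unique (hasSum_single i h)⟩
  by_contra hj
  exact (lt_hasSum hf i (fun k _ => hnonneg k) j hji ((hnonneg j).lt_of_ne' hj)).ne ha.symm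

namespace Matrix

variable {n : Type*} [Fintype n]

theorem trace_nonneg_of_nonneg {R : Type*} [AddCommMonoid R] [PartialOrder R]
    [IsOrderedAddMonoid R] {A : Matrix n n R} (hA : ∀ i j, 0 ≤ A i j) : 0 ≤ A.trace :=
  Finset.sum_nonneg fun i _ => hA i i

theorem trace_eq_zero_iff_of_nonneg {R : Type*} [AddCommMonoid R] [PartialOrder R]
    [IsOrderedAddMonoid R] {A : Matrix n n R} (hA : ∀ i j, 0 ≤ A i j) :
    A.trace = 0 ↔ ∀ i, A i i = 0 := by
  simpa [trace] using Finset.sum_eq_zero_iff_of_nonneg fun i (_ : i ∈ Finset.univ) => hA i i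

section LinearOrderedSemiring

variable [DecidableEq n] {R : Type*} [Semiring R] [LinearOrder R] [IsStrictOrderedRing R]
  {A : Matrix n n R}

theorem pow_succ_apply_pos_iff (hA : ∀ i j, 0 ≤ A i j) (k : ℕ) (i j : n) :
    0 < (A ^ (k + 1)) i j ↔ ∃ l, 0 < (A ^ k) i l ∧ 0 < A l j := by
  rw [pow_succ, mul_apply, Finset.sum_pos_iff_of_nonneg
    fun l _ => mul_nonneg (pow_apply_nonneg hA k i l) (hA l j)]
  simp only [Finset.mem_univ, true_and]
  refine exists_congr fun l => ⟨fun h => ?_, fun h => mul_pos h.1 h.2⟩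
  exact ⟨pos_of_mul_pos_left h (hA l j), pos_of_mul_pos_right h (pow_apply_nonneg hA k i l)⟩

theorem exists_pow_succ_apply_pos_iff_transGen (hA : ∀ i j, 0 ≤ A i j) (i j : n) :
    (∃ k, 0 < (A ^ (k + 1)) i j) ↔ Relation.TransGen (fun a b => 0 < A a b) i j := by
  constructor
  · rintro ⟨k, hk⟩
    induction k generalizing j with
    | zero => exact .single (by simpa using hk)
    | succ k ih =>
      obtain ⟨l, hil, hlj⟩ := (pow_succ_apply_pos_iff hA _ i j).1 hk
      exact (ih l hil).tail hlj
  · intro h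
    induction h with
    | single hij => exact ⟨0, by simpa using hij⟩
    | tail _ hbc ih =>
      obtain ⟨k, hk⟩ := ih
      exact ⟨k + 1, (pow_succ_apply_pos_iff hA _ i _).2 ⟨_, hk, hbc⟩⟩

theorem forall_trace_pow_succ_eq_zero_iff (hA : ∀ i j, 0 ≤ A i j) :
    (∀ k, (A ^ (k + 1)).trace = 0) ↔
      ∀ i, ¬ Relation.TransGen (fun a b => 0 < A a b) i i := by
  simp_rw [trace_eq_zero_iff_of_nonneg (pow_apply_nonneg hA _),
    ← exists_pow_succ_apply_pos_iff_transGen hA, (pow_apply_nonneg hA _ _ _).lt_iff_ne',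
    not_exists, not_not]
  exact forall_comm

end LinearOrderedSemiring

attribute [local instance] Matrix.linftyOpNormedRing Matrix.linftyOpNormedAlgebra in
theorem hasSum_trace_exp {𝕂 : Type*} [RCLike 𝕂] [DecidableEq n] (A : Matrix n n 𝕂) :
    HasSum (fun k => (k !⁻¹ : 𝕂) * (A ^ k).trace) (exp A).trace := by
  have h := (exp_series_hasSum_exp' (𝕂 := 𝕂) A).map (traceAddMonoidHom n 𝕂)
    continuous_id.matrix_trace
  simp only [Function.comp_def, traceAddMonoidHom_apply, trace_smul, smul_eq_mul] at h
  exact h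

end Matrix

theorem trace_exp_ge_and_eq_iff_acyclic (P : ℕ) (W : Matrix (Fin P) (Fin P) ℝ)
    (hnonneg : ∀ i j, 0 ≤ W i j) :
    (P : ℝ) ≤ (NormedSpace.exp W).trace ∧
      ((NormedSpace.exp W).trace = (P : ℝ) ↔
        ∀ i : Fin P, ¬ Relation.TransGen (fun a b => 0 < W a b) i i) := by
  have hsum := Matrix.hasSum_trace_exp W
  have hterm (k : ℕ) : 0 ≤ (k !⁻¹ : ℝ) * (W ^ k).trace :=
    mul_nonneg (by positivity) (Matrix.trace_nonneg_of_nonneg (Matrix.pow_apply_nonneg hnonneg k))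
  have h0 : (0 !⁻¹ : ℝ) * (W ^ 0).trace = P := by simp
  refine ⟨h0 ▸ le_hasSum hsum 0 fun k _ => hterm k, ?_⟩
  rw [← h0, hsum.eq_apply_iff_of_nonneg hterm 0,
    ← Matrix.forall_trace_pow_succ_eq_zero_iff hnonneg]
  simp [Nat.forall_ne_zero_iff, Nat.factorial_ne_zero]
end
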